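/- arXiv:1607.03569 — 2 statements merged into one kernel-verified Lean document; each statement's English description precedes it below -/
import Mathlib

section
/- Under the A-hypergeometric (microcanonical Gibbs) distribution q_{n,k}(s;x) = x^s/(s! Z_{n,k}(x)) on S_{n,k}, the joint factorial moments of the size index are E[Π_{i=1}^n [S_i]_{r_i}] = (Z_{n - Σ i r_i, k - Σ r_i}(x) / Z_{n,k}(x)) · x^r, provided n - k ≥ Σ_i (i-1) r_i, and the expectation is 0 otherwise. -/
open Finset

/-- The support `S_{n,k}` of size indices. -/
noncomputable def Snk (n k : ℕ) : Finset (Fin n → ℕ) :=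
  (Finset.Iic (fun _ => n)).filter fun s => (∑ i, (i.1 + 1) * s i) = n ∧ (∑ i, s i) = k

/-- `Z_{n,k}(x)`, indeterminates indexed by part sizes; `Z = 0` when the support is empty. -/
noncomputable def Zhyp (n k : ℕ) (x : ℕ → ℝ) : ℝ :=
  ∑ s ∈ Snk n k, ∏ i, x (i.1 + 1) ^ s i / (Nat.factorial (s i) : ℝ)


/-- reindex Icc 1 n to Fin n (sum version). -/
lemma sum_Icc_one_fin {M : Type*} [AddCommMonoid M] (n : ℕ) (f : ℕ → M) :
    ∑ i ∈ Finset.Icc 1 n, f i = ∑ i : Fin n, f (i.1 + 1) := by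
  rw [Fin.sum_univ_eq_sum_range (fun i => f (i + 1)), ← Finset.Ico_add_one_right_eq_Icc,
    Finset.sum_Ico_eq_sum_range]
  simp [add_comm]

lemma prod_Icc_one_fin {M : Type*} [CommMonoid M] (n : ℕ) (f : ℕ → M) :
    ∏ i ∈ Finset.Icc 1 n, f i = ∏ i : Fin n, f (i.1 + 1) := by
  rw [Fin.prod_univ_eq_prod_range (fun i => f (i + 1)), ← Finset.Ico_add_one_right_eq_Icc,
    Finset.prod_Ico_eq_prod_range]
  simp [add_comm]

lemma desc_mul_fact (t r : ℕ) :
    (t.factorial : ℕ) * (t + r).descFactorial r = (t + r).factorial := by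
  have := Nat.factorial_mul_descFactorial (n := t + r) (k := r) (Nat.le_add_left r t)
  simpa using this

noncomputable def TT (n m j : ℕ) : Finset (Fin n → ℕ) :=
  (Finset.Iic (fun _ => m)).filter fun s => (∑ i, (i.1 + 1) * s i) = m ∧ (∑ i, s i) = j

lemma mem_TT {n m j : ℕ} {s : Fin n → ℕ} :
    s ∈ TT n m j ↔ (∑ i, (i.1 + 1) * s i) = m ∧ (∑ i, s i) = j := by
  constructor
  · intro h; exact (Finset.mem_filter.mp h).2
  · intro h
    refine Finset.mem_filter.mpr ⟨Finset.mem_Iic.mpr ?_, h⟩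
    intro i
    calc s i ≤ (i.1 + 1) * s i := Nat.le_mul_of_pos_left _ i.1.succ_pos
      _ ≤ ∑ j, (j.1 + 1) * s j :=
        Finset.single_le_sum (f := fun j : Fin n => (j.1 + 1) * s j)
          (fun _ _ => Nat.zero_le _) (Finset.mem_univ i)
      _ = m := h.1

lemma TT_apply_eq_zero {n m j : ℕ} {t : Fin n → ℕ} (ht : t ∈ TT n m j) {i : Fin n}
    (hi : m ≤ i.1) : t i = 0 := by
  have h1 := (mem_TT.mp ht).1
  by_contra h0
  have h2 : (i.1 + 1) * t i ≤ m := by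
    rw [← h1]
    exact Finset.single_le_sum (f := fun j : Fin n => (j.1 + 1) * t j)
      (fun _ _ => Nat.zero_le _) (Finset.mem_univ i)
  have h3 : 1 ≤ t i := Nat.pos_of_ne_zero h0
  nlinarith [Nat.le_mul_of_pos_right (i.1 + 1) h3]

/-- extension by zero -/
def extZ {m n : ℕ} (h : m ≤ n) (s : Fin m → ℕ) : Fin n → ℕ :=
  fun i => if h' : i.1 < m then s ⟨i.1, h'⟩ else 0

lemma prod_extZ {M : Type*} [CommMonoid M] {m n : ℕ} (h : m ≤ n) (s : Fin m → ℕ)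
    (F : ℕ → ℕ → M) (hF : ∀ i, F i 0 = 1) :
    ∏ i : Fin n, F i.1 (extZ h s i) = ∏ i : Fin m, F i.1 (s i) := by
  have e1 : ∏ i : Fin n, F i.1 (extZ h s i)
      = ∏ i ∈ Finset.range n, F i (if h' : i < m then s ⟨i, h'⟩ else 0) := by
    rw [← Fin.prod_univ_eq_prod_range (fun i => F i (if h' : i < m then s ⟨i, h'⟩ else 0)) n]
    rfl
  have e2 : ∏ i : Fin m, F i.1 (s i)
      = ∏ i ∈ Finset.range m, F i (if h' : i < m then s ⟨i, h'⟩ else 0) := by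
    rw [← Fin.prod_univ_eq_prod_range (fun i => F i (if h' : i < m then s ⟨i, h'⟩ else 0)) m]
    exact Finset.prod_congr rfl fun i _ => by rw [dif_pos i.2]
  rw [e1, e2]
  exact (Finset.prod_subset (Finset.range_subset_range.mpr h) (by
    intro i _ hi
    rw [Finset.mem_range] at hi
    rw [dif_neg hi, hF])).symm

lemma sum_extZ {m n : ℕ} (h : m ≤ n) (s : Fin m → ℕ)
    (F : ℕ → ℕ → ℕ) (hF : ∀ i, F i 0 = 0) :
    ∑ i : Fin n, F i.1 (extZ h s i) = ∑ i : Fin m, F i.1 (s i) := by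
  have e1 : ∑ i : Fin n, F i.1 (extZ h s i)
      = ∑ i ∈ Finset.range n, F i (if h' : i < m then s ⟨i, h'⟩ else 0) := by
    rw [← Fin.sum_univ_eq_sum_range (fun i => F i (if h' : i < m then s ⟨i, h'⟩ else 0)) n]
    rfl
  have e2 : ∑ i : Fin m, F i.1 (s i)
      = ∑ i ∈ Finset.range m, F i (if h' : i < m then s ⟨i, h'⟩ else 0) := by
    rw [← Fin.sum_univ_eq_sum_range (fun i => F i (if h' : i < m then s ⟨i, h'⟩ else 0)) m]
    exact Finset.sum_congr rfl fun i _ => by rw [dif_pos i.2]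
  rw [e1, e2]
  exact (Finset.sum_subset (Finset.range_subset_range.mpr h) (by
    intro i _ hi
    rw [Finset.mem_range] at hi
    rw [dif_neg hi, hF])).symm

lemma Snk_eq_TT (n k : ℕ) : Snk n k = TT n n k := rfl

lemma Zhyp_TT {m n : ℕ} (h : m ≤ n) (j : ℕ) (x : ℕ → ℝ) :
    Zhyp m j x = ∑ s ∈ TT n m j, ∏ i, x (i.1 + 1) ^ s i / (Nat.factorial (s i) : ℝ) := by
  unfold Zhyp
  rw [Snk_eq_TT]
  refine Finset.sum_nbij' (i := fun s => extZ h s)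
    (j := fun t => fun i : Fin m => t (Fin.castLE h i)) ?_ ?_ ?_ ?_ ?_
  · intro s hs
    obtain ⟨h1, h2⟩ := mem_TT.mp hs
    refine mem_TT.mpr ⟨?_, ?_⟩
    · rw [sum_extZ h s (fun i t => (i + 1) * t) (fun i => by ring)]; exact h1
    · rw [sum_extZ h s (fun _ t => t) (fun _ => rfl)]; exact h2
  · intro t ht
    obtain ⟨h1, h2⟩ := mem_TT.mp ht
    have hext : extZ h (fun i : Fin m => t (Fin.castLE h i)) = t := by
      funext i
      by_cases h' : i.1 < m
      · simp only [extZ, dif_pos h']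
        congr 1
      · simp only [extZ, dif_neg h']
        exact (TT_apply_eq_zero ht (Nat.le_of_not_lt h')).symm
    refine mem_TT.mpr ⟨?_, ?_⟩
    · rw [← sum_extZ h (fun i : Fin m => t (Fin.castLE h i)) (fun i t => (i + 1) * t)
        (fun i => by ring), hext]; exact h1
    · rw [← sum_extZ h (fun i : Fin m => t (Fin.castLE h i)) (fun _ t => t)
        (fun _ => rfl), hext]; exact h2
  · intro s _
    funext i
    simp [extZ, i.2]
  · intro t ht
    funext i
    by_cases h' : i.1 < m
    · simp only [extZ, dif_pos h']
      congr 1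
    · simp only [extZ, dif_neg h']
      exact (TT_apply_eq_zero ht (Nat.le_of_not_lt h')).symm
  · intro s _
    exact (prod_extZ h s (fun i t => x (i + 1) ^ t / (Nat.factorial t : ℝ))
      (fun i => by simp)).symm

lemma snk_weight {n k : ℕ} {s : Fin n → ℕ} (hs : s ∈ Snk n k) :
    ∑ i : Fin n, i.1 * s i = n - k := by
  obtain ⟨h1, h2⟩ := mem_TT.mp (Snk_eq_TT n k ▸ hs)
  have : ∑ i : Fin n, (i.1 + 1) * s i = ∑ i : Fin n, i.1 * s i + ∑ i : Fin n, s i := by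
    rw [← Finset.sum_add_distrib]
    exact Finset.sum_congr rfl fun i _ => by ring
  omega

lemma term_zero {n k : ℕ} {s : Fin n → ℕ} (hs : s ∈ Snk n k) (r : ℕ → ℕ)
    (h : ¬ ((∑ i ∈ Finset.Icc 1 n, (i - 1) * r i) ≤ n - k ∧ (∑ i ∈ Finset.Icc 1 n, r i) ≤ k)) :
    (∏ i, ((s i).descFactorial (r (i.1 + 1)) : ℝ)) = 0 := by
  obtain ⟨h1, h2⟩ := mem_TT.mp (Snk_eq_TT n k ▸ hs)
  by_contra h0
  have hle : ∀ i : Fin n, r (i.1 + 1) ≤ s i := by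
    intro i
    by_contra hlt
    push_neg at hlt
    exact h0 (Finset.prod_eq_zero (Finset.mem_univ i)
      (by rw [Nat.descFactorial_eq_zero_iff_lt.mpr hlt, Nat.cast_zero]))
  apply h
  have e1 : ∑ i ∈ Finset.Icc 1 n, (i - 1) * r i = ∑ i : Fin n, i.1 * r (i.1 + 1) := by
    rw [sum_Icc_one_fin n (fun i => (i - 1) * r i)]; simp
  have e2 : ∑ i ∈ Finset.Icc 1 n, r i = ∑ i : Fin n, r (i.1 + 1) := sum_Icc_one_fin n r
  constructor
  · rw [e1, ← snk_weight hs]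
    exact Finset.sum_le_sum fun i _ => Nat.mul_le_mul_left _ (hle i)
  · rw [e2, ← h2]
    exact Finset.sum_le_sum fun i _ => hle i

lemma term_id (x : ℝ) (t r : ℕ) :
    ((t + r).descFactorial r : ℝ) * (x ^ (t + r) / (Nat.factorial (t + r) : ℝ))
      = x ^ r * (x ^ t / (Nat.factorial t : ℝ)) := by
  have key : ((Nat.factorial t : ℕ) : ℝ) * ((t + r).descFactorial r : ℝ)
      = ((t + r).factorial : ℝ) := by exact_mod_cast congrArg Nat.cast (desc_mul_fact t r)
  have h1 : (Nat.factorial t : ℝ) ≠ 0 := Nat.cast_ne_zero.mpr (Nat.factorial_ne_zero t)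
  have h2 : (Nat.factorial (t + r) : ℝ) ≠ 0 := Nat.cast_ne_zero.mpr (Nat.factorial_ne_zero _)
  field_simp
  rw [pow_add]
  linear_combination (x ^ t * x ^ r) * key

lemma numer_eq (n k : ℕ) (hkn : k ≤ n) (x : ℕ → ℝ) (r : ℕ → ℕ)
    (hA : (∑ i ∈ Finset.Icc 1 n, (i - 1) * r i) ≤ n - k)
    (hB : (∑ i ∈ Finset.Icc 1 n, r i) ≤ k) :
    (∑ s ∈ Snk n k,
        (∏ i, ((s i).descFactorial (r (i.1 + 1)) : ℝ)) *
          ∏ i, x (i.1 + 1) ^ s i / (Nat.factorial (s i) : ℝ))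
    = Zhyp (n - ∑ i ∈ Finset.Icc 1 n, i * r i) (k - ∑ i ∈ Finset.Icc 1 n, r i) x *
        ∏ i ∈ Finset.Icc 1 n, x i ^ r i := by
  set C := ∑ i ∈ Finset.Icc 1 n, i * r i with hC
  set B := ∑ i ∈ Finset.Icc 1 n, r i with hBdef
  have hCAB : C = (∑ i ∈ Finset.Icc 1 n, (i - 1) * r i) + B := by
    rw [hC, hBdef, ← Finset.sum_add_distrib]
    refine Finset.sum_congr rfl fun i hi => ?_
    have : 1 ≤ i := (Finset.mem_Icc.mp hi).1
    cases i with
    | zero => omega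
    | succ j => simp only [Nat.add_sub_cancel]; ring
  have hCn : C ≤ n := by omega
  have hCfin : ∑ i : Fin n, (i.1 + 1) * r (i.1 + 1) = C := by
    rw [hC, sum_Icc_one_fin n (fun i => i * r i)]
  have hBfin : ∑ i : Fin n, r (i.1 + 1) = B := by
    rw [hBdef, sum_Icc_one_fin n r]
  -- drop vanishing terms
  rw [← Finset.sum_filter_add_sum_filter_not (Snk n k)
    (fun s => ∀ i : Fin n, r (i.1 + 1) ≤ s i)]
  have hzero : ∑ s ∈ (Snk n k).filter (fun s => ¬ ∀ i : Fin n, r (i.1 + 1) ≤ s i),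
      (∏ i, ((s i).descFactorial (r (i.1 + 1)) : ℝ)) *
        ∏ i, x (i.1 + 1) ^ s i / (Nat.factorial (s i) : ℝ) = 0 := by
    refine Finset.sum_eq_zero fun s hs => ?_
    obtain ⟨_, hP⟩ := Finset.mem_filter.mp hs
    push_neg at hP
    obtain ⟨i, hi⟩ := hP
    rw [Finset.prod_eq_zero (Finset.mem_univ i)
      (by rw [Nat.descFactorial_eq_zero_iff_lt.mpr hi, Nat.cast_zero]), zero_mul]
  rw [hzero, add_zero]
  -- bijection with TT n (n - C) (k - B)
  have hmain : ∑ s ∈ (Snk n k).filter (fun s => ∀ i : Fin n, r (i.1 + 1) ≤ s i),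
      (∏ i, ((s i).descFactorial (r (i.1 + 1)) : ℝ)) *
        ∏ i, x (i.1 + 1) ^ s i / (Nat.factorial (s i) : ℝ)
      = ∑ t ∈ TT n (n - C) (k - B),
        (∏ i : Fin n, x (i.1 + 1) ^ r (i.1 + 1)) *
          ∏ i, x (i.1 + 1) ^ t i / (Nat.factorial (t i) : ℝ) := by
    refine Finset.sum_nbij' (i := fun s => fun i : Fin n => s i - r (i.1 + 1))
      (j := fun t => fun i : Fin n => t i + r (i.1 + 1)) ?_ ?_ ?_ ?_ ?_
    · intro s hs
      obtain ⟨hmem, hP⟩ := Finset.mem_filter.mp hs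
      obtain ⟨h1, h2⟩ := mem_TT.mp (Snk_eq_TT n k ▸ hmem)
      refine mem_TT.mpr ⟨?_, ?_⟩ <;> beta_reduce
      · have : (∑ i : Fin n, (i.1 + 1) * (s i - r (i.1 + 1)))
            + ∑ i : Fin n, (i.1 + 1) * r (i.1 + 1) = ∑ i : Fin n, (i.1 + 1) * s i := by
          rw [← Finset.sum_add_distrib]
          exact Finset.sum_congr rfl fun i _ => by
            rw [← Nat.mul_add, Nat.sub_add_cancel (hP i)]
        omega
      · have : (∑ i : Fin n, (s i - r (i.1 + 1))) + ∑ i : Fin n, r (i.1 + 1)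
            = ∑ i : Fin n, s i := by
          rw [← Finset.sum_add_distrib]
          exact Finset.sum_congr rfl fun i _ => Nat.sub_add_cancel (hP i)
        omega
    · intro t ht
      obtain ⟨h1, h2⟩ := mem_TT.mp ht
      refine Finset.mem_filter.mpr ⟨?_, fun i => Nat.le_add_left _ _⟩
      rw [Snk_eq_TT]
      refine mem_TT.mpr ⟨?_, ?_⟩ <;> beta_reduce
      · have : ∑ i : Fin n, (i.1 + 1) * (t i + r (i.1 + 1))
            = (∑ i : Fin n, (i.1 + 1) * t i) + ∑ i : Fin n, (i.1 + 1) * r (i.1 + 1) := by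
          rw [← Finset.sum_add_distrib]
          exact Finset.sum_congr rfl fun i _ => by ring
        omega
      · have : ∑ i : Fin n, (t i + r (i.1 + 1))
            = (∑ i : Fin n, t i) + ∑ i : Fin n, r (i.1 + 1) := Finset.sum_add_distrib
        omega
    · intro s hs
      obtain ⟨_, hP⟩ := Finset.mem_filter.mp hs
      funext i
      beta_reduce
      have := hP i
      omega
    · intro t _
      funext i
      beta_reduce
      omega
    · intro s hs
      obtain ⟨_, hP⟩ := Finset.mem_filter.mp hs
      rw [← Finset.prod_mul_distrib, ← Finset.prod_mul_distrib]
      refine Finset.prod_congr rfl fun i _ => ?_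
      have h := term_id (x (i.1 + 1)) (s i - r (i.1 + 1)) (r (i.1 + 1))
      rw [Nat.sub_add_cancel (hP i)] at h
      exact h
  rw [hmain, ← Finset.mul_sum, ← Zhyp_TT (Nat.sub_le n C) (k - B) x,
    prod_Icc_one_fin n (fun i => x i ^ r i), mul_comm]
/-- joint factorial moments of the size index under the
`A`-hypergeometric distribution:
`E[Π_i [S_i]_{r_i}] = (Z_{n-Σ i rᵢ, k-Σ rᵢ}/Z_{n,k})·x^r` if `Σ(i-1)rᵢ ≤ n-k`
(with `Z_{m,j} := 0` for an empty support, in particular when `Σ rᵢ > k`),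
and `0` otherwise. -/
theorem factorial_moments_A_hypergeometric
    (n k : ℕ) (hk : 1 ≤ k) (hkn : k ≤ n)
    (x : ℕ → ℝ) (hx : ∀ i, 0 < x i) (r : ℕ → ℕ) :
    (∑ s ∈ Snk n k,
        (∏ i, ((s i).descFactorial (r (i.1 + 1)) : ℝ)) *
          ∏ i, x (i.1 + 1) ^ s i / (Nat.factorial (s i) : ℝ)) / Zhyp n k x
    = if (∑ i ∈ Finset.Icc 1 n, (i - 1) * r i) ≤ n - k then
        ((if (∑ i ∈ Finset.Icc 1 n, r i) ≤ k then
            Zhyp (n - ∑ i ∈ Finset.Icc 1 n, i * r i)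
              (k - ∑ i ∈ Finset.Icc 1 n, r i) x
          else 0) / Zhyp n k x) * ∏ i ∈ Finset.Icc 1 n, x i ^ r i
      else 0 := by
  by_cases hA : (∑ i ∈ Finset.Icc 1 n, (i - 1) * r i) ≤ n - k
  · by_cases hB : (∑ i ∈ Finset.Icc 1 n, r i) ≤ k
    · rw [if_pos hA, if_pos hB, numer_eq n k hkn x r hA hB, div_mul_eq_mul_div]
    · rw [if_pos hA, if_neg hB, zero_div, zero_mul,
        Finset.sum_eq_zero fun s hs => by
          rw [term_zero hs r (fun h => hB h.2), zero_mul], zero_div]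
  · rw [if_neg hA,
      Finset.sum_eq_zero fun s hs => by
        rw [term_zero hs r (fun h => hA h.1), zero_mul], zero_div]
end

section
/- In particular, for the A-hypergeometric distribution q_{n,k}(s;x) = x^s/(s! Z_{n,k}(x)), the first moment is E[S_i] = x_i · Z_{n-i, k-1}(x)/Z_{n,k}(x) for each i ∈ [n-k+1]. -/
/-!
Multiplying the weight `x^s/s!` by `s_i` removes one part of size `i`:
`s_i x^s/s! = x_i x^(s-e_i)/(s-e_i)!`. The shift `s ↦ s - e_i` is a bijection from the
`s ∈ S_{n,k}` with `s_i ≥ 1` onto `S_{n-i,k-1}`, once the latter is padded by zeros to live in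
`ℕ^n`; summing gives `∑ s_i x^s/s! = x_i Z_{n-i,k-1}(x)`.
-/

open Finset

namespace Fin

variable {d N : ℕ}

@[to_additive]
theorem prod_univ_eq_prod_castLE {M : Type*} [CommMonoid M] (h : d ≤ N)
    (f : Fin N → M) (hf : ∀ j : Fin N, d ≤ j → f j = 1) :
    ∏ j, f j = ∏ j : Fin d, f (castLE h j) := by
  refine (Finset.prod_subset (subset_univ _) fun j _ hj => hf j ?_).symm.trans
    (Finset.prod_map univ (castLEEmb h) f)
  by_contra! hjd
  exact hj (mem_map.2 ⟨⟨j, hjd⟩, mem_univ _, rfl⟩)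

def extendByZero (t : Fin d → ℕ) (j : Fin N) : ℕ :=
  if h : j.1 < d then t ⟨j, h⟩ else 0

@[simp]
theorem extendByZero_castLE (h : d ≤ N) (t : Fin d → ℕ) (j : Fin d) :
    extendByZero t (castLE h j) = t j :=
  dif_pos j.2

@[to_additive]
theorem prod_extendByZero {M : Type*} [CommMonoid M] (h : d ≤ N) (F : ℕ → ℕ → M)
    (hF : ∀ m, F m 0 = 1) (t : Fin d → ℕ) :
    ∏ j : Fin N, F j (extendByZero t j) = ∏ j : Fin d, F j (t j) := by
  rw [prod_univ_eq_prod_castLE h _ fun j hj => by simp [extendByZero, hj.not_gt, hF]]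
  simp only [extendByZero_castLE, val_castLE]

end Fin

namespace Snk

variable {d N : ℕ}

def weight (s : Fin N → ℕ) : ℕ := ∑ j, (j.1 + 1) * s j

noncomputable def monomial (x : ℕ → ℝ) (s : Fin N → ℕ) : ℝ :=
  ∏ j, x (j.1 + 1) ^ s j / (Nat.factorial (s j) : ℝ)

theorem weight_add (s t : Fin N → ℕ) : weight (s + t) = weight s + weight t := by
  simp only [weight, Pi.add_apply, mul_add, sum_add_distrib]

theorem weight_single (i : Fin N) (c : ℕ) : weight (Pi.single i c) = (i.1 + 1) * c := by
  simp [weight, Pi.single_apply, mul_ite]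

theorem mul_apply_le_weight (s : Fin N → ℕ) (j : Fin N) : (j.1 + 1) * s j ≤ weight s :=
  single_le_sum (f := fun j : Fin N => (j.1 + 1) * s j) (fun _ _ => Nat.zero_le _) (mem_univ j)

theorem apply_eq_zero_of_weight_le {s : Fin N → ℕ} {j : Fin N} (h : weight s ≤ j) : s j = 0 := by
  by_contra hj
  nlinarith [mul_apply_le_weight s j, Nat.one_le_iff_ne_zero.2 hj]

theorem extendByZero_comp_castLE (h : d ≤ N) {s : Fin N → ℕ} (hs : weight s ≤ d) :
    Fin.extendByZero (s ∘ Fin.castLE h) = s := by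
  funext j
  by_cases hj : j.1 < d
  · simp [Fin.extendByZero, hj]
  · simp [Fin.extendByZero, hj, apply_eq_zero_of_weight_le (hs.trans (not_lt.1 hj))]

theorem weight_extendByZero (h : d ≤ N) (t : Fin d → ℕ) :
    weight (Fin.extendByZero t : Fin N → ℕ) = weight t :=
  Fin.sum_extendByZero h (fun m v => (m + 1) * v) (fun _ => mul_zero _) t

theorem sum_extendByZero (h : d ≤ N) (t : Fin d → ℕ) :
    ∑ j : Fin N, Fin.extendByZero t j = ∑ j, t j :=
  Fin.sum_extendByZero h (fun _ v => v) (fun _ => rfl) t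

theorem monomial_extendByZero (h : d ≤ N) (x : ℕ → ℝ) (t : Fin d → ℕ) :
    monomial x (Fin.extendByZero t : Fin N → ℕ) = monomial x t :=
  Fin.prod_extendByZero h (fun m v => x (m + 1) ^ v / (Nat.factorial v : ℝ)) (by simp) t

theorem monomial_add_single (x : ℕ → ℝ) (t : Fin N → ℕ) (i : Fin N) :
    ((t i + 1 : ℕ) : ℝ) * monomial x (t + Pi.single i 1) = x (i + 1) * monomial x t := by
  have hfactor : ∀ j, x (j.1 + 1) ^ (t j + (Pi.single i 1 : Fin N → ℕ) j)
        / (t j + (Pi.single i 1 : Fin N → ℕ) j).factorial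
      = x (j.1 + 1) ^ t j / (t j).factorial
        * if j = i then x (i + 1) / ((t i + 1 : ℕ) : ℝ) else 1 := by
    intro j
    rcases eq_or_ne j i with rfl | hji
    · simp only [Pi.single_eq_same, if_pos, Nat.factorial_succ, Nat.cast_mul, pow_succ]
      field_simp
    · simp [hji]
  simp only [monomial, Pi.add_apply, hfactor, prod_mul_distrib, prod_ite_eq', mem_univ, if_true]
  field_simp

end Snk

open Snk

/-- `S_{d,k}` realised inside `ℕ^N`; for `d ≤ N` the coordinates beyond `d` are forced to vanish. -/
noncomputable def SnkDim (N d k : ℕ) : Finset (Fin N → ℕ) :=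
  (Iic fun _ => d).filter fun s => weight s = d ∧ ∑ j, s j = k

theorem Snk_eq_SnkDim (n k : ℕ) : Snk n k = SnkDim n n k := rfl

theorem mem_SnkDim {N d k : ℕ} {s : Fin N → ℕ} :
    s ∈ SnkDim N d k ↔ weight s = d ∧ ∑ j, s j = k := by
  refine ⟨fun hs => (mem_filter.1 hs).2, fun hs => mem_filter.2 ⟨mem_Iic.2 fun j => ?_, hs⟩⟩
  calc s j ≤ (j.1 + 1) * s j := Nat.le_mul_of_pos_left _ j.1.succ_pos
    _ ≤ d := hs.1 ▸ mul_apply_le_weight s j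

theorem sum_SnkDim_monomial {d N : ℕ} (h : d ≤ N) (k : ℕ) (x : ℕ → ℝ) :
    ∑ s ∈ SnkDim N d k, monomial x s = Zhyp d k x := by
  symm
  refine sum_nbij' Fin.extendByZero (fun s => s ∘ Fin.castLE h) ?_ ?_ ?_ ?_ ?_
  · intro t ht
    rw [Snk_eq_SnkDim, mem_SnkDim] at ht
    rwa [mem_SnkDim, weight_extendByZero h, sum_extendByZero h]
  · intro s hs
    rw [mem_SnkDim] at hs
    rw [← extendByZero_comp_castLE h hs.1.le] at hs
    rwa [Snk_eq_SnkDim, mem_SnkDim, ← weight_extendByZero h, ← sum_extendByZero h]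
  · intro t _
    funext j
    exact Fin.extendByZero_castLE h t j
  · intro s hs
    exact extendByZero_comp_castLE h (mem_SnkDim.1 hs).1.le
  · intro t _
    exact (monomial_extendByZero h x t).symm

section Shift

variable {N d d' k k' : ℕ} (i : Fin N)

theorem filter_SnkDim_apply_ne_zero (hd : d' + (i + 1) = d) (hk : k' + 1 = k) :
    (SnkDim N d k).filter (fun s => s i ≠ 0)
      = (SnkDim N d' k').map (addRightEmbedding (Pi.single i 1)) := by
  ext s
  simp only [mem_filter, mem_map, addRightEmbedding_apply, mem_SnkDim]
  constructor
  · rintro ⟨⟨hw, hsum⟩, hsi⟩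
    have hle : (Pi.single i 1 : Fin N → ℕ) ≤ s := fun j => by
      rcases eq_or_ne j i with rfl | hji
      · simpa [Nat.one_le_iff_ne_zero] using hsi
      · simp [hji]
    have hs := tsub_add_cancel_of_le hle
    refine ⟨s - Pi.single i 1, ⟨?_, ?_⟩, hs⟩
    · have hweight := weight_add (s - Pi.single i 1) (Pi.single i 1)
      rw [hs, weight_single] at hweight
      omega
    · have hsize := sum_add_distrib (s := univ) (f := s - Pi.single i 1) (g := Pi.single i 1)
      simp only [← Pi.add_apply, hs, sum_pi_single', mem_univ, if_true] at hsize
      omega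
  · rintro ⟨t, ⟨hw, hsum⟩, rfl⟩
    refine ⟨⟨?_, ?_⟩, by simp⟩
    · rw [weight_add, weight_single]
      omega
    · simp [sum_add_distrib, sum_pi_single', hsum, hk]

theorem sum_SnkDim_mul_monomial (hd : d' + (i + 1) = d) (hk : k' + 1 = k) (x : ℕ → ℝ) :
    ∑ s ∈ SnkDim N d k, (s i : ℝ) * monomial x s
      = x (i + 1) * ∑ t ∈ SnkDim N d' k', monomial x t := by
  rw [← sum_filter_of_ne fun s _ hs => by simpa using left_ne_zero_of_mul hs,
    filter_SnkDim_apply_ne_zero i hd hk, sum_map, mul_sum]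
  refine sum_congr rfl fun t _ => ?_
  simpa using monomial_add_single x t i

end Shift

/-- the first moment of the size index under the
`A`-hypergeometric distribution: `E[S_i] = x_i Z_{n-i,k-1}(x)/Z_{n,k}(x)`
for `i ∈ [n-k+1]`. -/
theorem first_moment_A_hypergeometric
    (n k : ℕ) (hk : 1 ≤ k) (hkn : k ≤ n)
    (x : ℕ → ℝ) (i : ℕ) (hi1 : 1 ≤ i) (hi2 : i ≤ n - k + 1) :
    (∑ s ∈ Snk n k,
        (s ⟨i - 1, by omega⟩ : ℝ) *
          ∏ j, x (j.1 + 1) ^ s j / (Nat.factorial (s j) : ℝ)) / Zhyp n k x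
    = x i * Zhyp (n - i) (k - 1) x / Zhyp n k x := by
  have hmoment := sum_SnkDim_mul_monomial (N := n) (d := n) (d' := n - i) (k := k) (k' := k - 1)
    ⟨i - 1, by omega⟩ (by simp only; omega) (by omega) x
  rw [sum_SnkDim_monomial (Nat.sub_le n i), Nat.sub_add_cancel hi1] at hmoment
  rw [Snk_eq_SnkDim, ← hmoment]
  rfl
end
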